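/- Let w be a right-infinite word over a finite alphabet with empty radical, i.e., Rad(w) = ∅. Then URec(w) is dense in Rec(w): every nonempty open subset of Rec(w) contains a uniformly recurrent class. -/

import Mathlib

/-- The factor of `w` of length `n` starting at position `i`. -/
def factorAt {A : Type*} (w : ℕ → A) (i n : ℕ) : List A :=
  (List.range n).map (fun k => w (i + k))

/-- `u` is a (finite, contiguous) factor of the right-infinite word `w`. -/
def IsFactorOf {A : Type*} (u : List A) (w : ℕ → A) : Prop :=
  ∃ i, u = factorAt w i u.length

/-- The set of factors of `w`. -/
def Fac {A : Type*} (w : ℕ → A) : Set (List A) := {u | IsFactorOf u w}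

/-- `w` is recurrent: every factor occurs at arbitrarily large positions. -/
def Recurrent {A : Type*} (w : ℕ → A) : Prop :=
  ∀ u ∈ Fac w, ∀ N : ℕ, ∃ i ≥ N, u = factorAt w i u.length

/-- `w` is uniformly recurrent: each factor occurs in every sufficiently long factor. -/
def UniformlyRecurrent {A : Type*} (w : ℕ → A) : Prop :=
  ∀ u ∈ Fac w, ∃ N : ℕ, ∀ y ∈ Fac w, y.length = N → u <:+: y

/-- `w` is (purely) periodic. -/
def PeriodicWord {A : Type*} (w : ℕ → A) : Prop :=
  ∃ p ≥ 1, ∀ n, w (n + p) = w n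

/-- `w` is eventually periodic. -/
def EventuallyPeriodicWord {A : Type*} (w : ℕ → A) : Prop :=
  ∃ p ≥ 1, ∃ N, ∀ n ≥ N, w (n + p) = w n

/-- The factor complexity function of `w`. -/
noncomputable def cplx {A : Type*} (w : ℕ → A) (n : ℕ) : ℕ :=
  Set.ncard {u | u ∈ Fac w ∧ u.length = n}

/-- A set of finite words is factor-closed. -/
def FactorClosed {A : Type*} (S : Set (List A)) : Prop :=
  ∀ y ∈ S, ∀ u, u <:+: y → u ∈ S

/-- The radical of `w`. -/
def Rad {A : Type*} (w : ℕ → A) : Set (List A) :=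
  {z | z ∈ Fac w ∧ ∀ Y : Finset (List A),
    (∀ y ∈ Y, y ∈ Fac w ∧ z <:+: y) →
    ∃ N : ℕ, ∀ L : List (List A), L.length = N → (∀ y ∈ L, y ∈ Y) →
      L.flatten ∉ Fac w}

/-- The recurrent spectrum of `w`, with classes identified with their factor sets. -/
def RecSpec {A : Type*} (w : ℕ → A) : Set (Set (List A)) :=
  {F | ∃ v : ℕ → A, Recurrent v ∧ F = Fac v ∧ Fac v ⊆ Fac w}

/-- The topology on the recurrent spectrum, whose closed sets are the C(S)
for factor-closed S ⊆ Fac w (generated by the complements of the C(S)). -/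
def recTop {A : Type*} (w : ℕ → A) : TopologicalSpace {F // F ∈ RecSpec w} :=
  TopologicalSpace.generateFrom
    {U | ∃ S : Set (List A), S ⊆ Fac w ∧ FactorClosed S ∧
      U = {F : {F // F ∈ RecSpec w} | ¬ F.1 ⊆ S}}

/-!
An open set containing a recurrent class `[u]` contains a principal open `U(z)` with `z` a factor
of `u`, because the factor set of a recurrent word is directed under `<:+:`. As `z` is not in the
radical, there is a finite set `Y` of factors of `w` containing `z` such that concatenations of
arbitrarily many blocks from `Y` are factors of `w`. Their factors form an infinite factorial
language, which by Furstenberg's theorem contains the factors of a uniformly recurrent word `v`: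
a minimal infinite factorial sublanguage (Zorn, with a König-type argument for chains) is
extendable to the right and every word of it occurs in all its long enough words. A long factor
of a concatenation of blocks contains a whole block, hence `z`, so `[v] ∈ U(z)`.
-/

section

variable {A : Type*}

@[simp]
lemma length_factorAt (w : ℕ → A) (i n : ℕ) : (factorAt w i n).length = n := by
  simp [factorAt]

lemma factorAt_add (w : ℕ → A) (i m n : ℕ) :
    factorAt w i (m + n) = factorAt w i m ++ factorAt w (i + m) n := by
  simp only [factorAt, List.range_add, List.map_append, List.map_map]
  congr 1
  exact List.map_congr_left fun k _ => by simp [Nat.add_assoc]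

lemma factorAt_mem_Fac (w : ℕ → A) (i n : ℕ) : factorAt w i n ∈ Fac w :=
  ⟨i, by rw [length_factorAt]⟩

lemma nil_mem_Fac (w : ℕ → A) : [] ∈ Fac w :=
  factorAt_mem_Fac w 0 0

lemma factorAt_infix_factorAt (w : ℕ → A) {i m k n : ℕ} (hki : k ≤ i) (hle : i + m ≤ k + n) :
    factorAt w i m <:+: factorAt w k n := by
  obtain ⟨d, rfl⟩ := Nat.exists_eq_add_of_le hki
  obtain ⟨e, rfl⟩ : ∃ e, n = d + m + e := ⟨n - (d + m), by omega⟩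
  rw [factorAt_add, factorAt_add]
  exact List.infix_append _ _ _

lemma exists_eq_factorAt_of_infix {w : ℕ → A} {u : List A} {i n : ℕ}
    (h : u <:+: factorAt w i n) : ∃ j, u = factorAt w (i + j) u.length := by
  obtain ⟨p, t, he⟩ := h
  have hn : n = p.length + (u.length + t.length) := by
    simpa [Nat.add_assoc] using (congrArg List.length he).symm
  rw [hn, factorAt_add, factorAt_add, List.append_assoc] at he
  have hp := List.append_inj he (by simp)
  exact ⟨p.length, (List.append_inj hp.2 (by simp)).1⟩

lemma factorClosed_Fac (w : ℕ → A) : FactorClosed (Fac w) := by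
  rintro y ⟨i, hi⟩ u hu
  rw [hi] at hu
  obtain ⟨j, hj⟩ := exists_eq_factorAt_of_infix hu
  exact ⟨i + j, hj⟩

lemma Fac_subset_of_forall_factorAt_zero_mem {w : ℕ → A} {S : Set (List A)} (hS : FactorClosed S)
    (h : ∀ n, factorAt w 0 n ∈ S) : Fac w ⊆ S := by
  rintro u ⟨i, hu⟩
  rw [hu]
  exact hS _ (h (i + u.length)) _ (factorAt_infix_factorAt w (Nat.zero_le i) (by omega))

lemma UniformlyRecurrent.recurrent {v : ℕ → A} (h : UniformlyRecurrent v) : Recurrent v := by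
  intro u hu N
  obtain ⟨M, hM⟩ := h u hu
  obtain ⟨j, hj⟩ := exists_eq_factorAt_of_infix (hM _ (factorAt_mem_Fac v N M) (length_factorAt ..))
  exact ⟨N + j, Nat.le_add_right _ _, hj⟩

lemma Recurrent.exists_mem_Fac_infix_infix {v : ℕ → A} (hv : Recurrent v) {y₁ y₂ : List A}
    (h₁ : y₁ ∈ Fac v) (h₂ : y₂ ∈ Fac v) : ∃ z ∈ Fac v, y₁ <:+: z ∧ y₂ <:+: z := by
  obtain ⟨i, hi⟩ := h₁
  obtain ⟨j, hij, hj⟩ := hv y₂ h₂ (i + y₁.length)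
  refine ⟨factorAt v 0 (j + y₂.length), factorAt_mem_Fac .., ?_, ?_⟩
  · nth_rw 1 [hi]; exact factorAt_infix_factorAt v (Nat.zero_le _) (by omega)
  · nth_rw 1 [hj]; exact factorAt_infix_factorAt v (Nat.zero_le _) (by omega)

def IsInfiniteFactorial (S : Set (List A)) : Prop :=
  FactorClosed S ∧ ∀ n, ∃ u ∈ S, u.length = n

lemma isInfiniteFactorial_Fac (w : ℕ → A) : IsInfiniteFactorial (Fac w) :=
  ⟨factorClosed_Fac w, fun n => ⟨_, factorAt_mem_Fac w 0 n, length_factorAt ..⟩⟩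

namespace IsInfiniteFactorial

variable {S : Set (List A)}

lemma nil_mem (hS : IsInfiniteFactorial S) : [] ∈ S :=
  let ⟨u, hu, _⟩ := hS.2 0
  hS.1 u hu [] List.nil_infix

/-- If no word of length `n` lay in `⋂₀ c`, the complements of the members of `c` would cover
the finitely many words of length `n`; as they form a chain, one of them would cover them all. -/
lemma sInter [Finite A] {c : Set (Set (List A))} (hc : ∀ S ∈ c, IsInfiniteFactorial S)
    (hchain : IsChain (· ⊆ ·) c) (hne : c.Nonempty) : IsInfiniteFactorial (⋂₀ c) := by
  refine ⟨fun y hy u hu => Set.mem_sInter.2 fun S hS => (hc S hS).1 y (hy S hS) u hu,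
    fun n => ?_⟩
  by_contra! hnone
  have hdir : DirectedOn (fun S T : Set (List A) => Sᶜ ⊆ Tᶜ) c :=
    fun S hS T hT => (hchain.total hS hT).elim
      (fun h => ⟨S, hS, subset_rfl, Set.compl_subset_compl.2 h⟩)
      (fun h => ⟨T, hT, Set.compl_subset_compl.2 h, subset_rfl⟩)
  have hfin := List.finite_length_eq A n
  have hcover : (hfin.toFinset : Set (List A)) ⊆ ⋃ S ∈ c, Sᶜ := by
    intro u hu
    rw [Set.Finite.coe_toFinset] at hu
    by_contra hu'
    simp only [Set.mem_iUnion, Set.mem_compl_iff, not_exists, not_not] at hu'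
    exact hnone u (Set.mem_sInter.2 fun S hS => hu' S hS) hu
  obtain ⟨S, hS, hSn⟩ := hdir.exists_mem_subset_of_finset_subset_biUnion hne hcover
  obtain ⟨u, huS, hun⟩ := (hc S hS).2 n
  exact hSn (by simpa using hun) huS

lemma exists_minimal_subset [Finite A] (hS : IsInfiniteFactorial S) :
    ∃ M ⊆ S, Minimal IsInfiniteFactorial M :=
  zorn_superset_nonempty {T | IsInfiniteFactorial T}
    (fun _ hc hchain hne => ⟨_, sInter hc hchain hne, fun _ => Set.sInter_subset_of_mem⟩) S hS

lemma setOf_append_singleton (hS : IsInfiniteFactorial S) :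
    IsInfiniteFactorial {u | ∃ a, u ++ [a] ∈ S} := by
  refine ⟨?_, fun n => ?_⟩
  · rintro y ⟨a, hya⟩ u ⟨p, t, rfl⟩
    cases t with
    | nil => exact ⟨a, hS.1 _ hya _ ⟨p, [], by simp⟩⟩
    | cons b t => exact ⟨b, hS.1 _ hya _ ⟨p, t ++ [a], by simp⟩⟩
  · obtain ⟨u, hu, hlen⟩ := hS.2 (n + 1)
    refine ⟨u.dropLast, ⟨u.getLast (by grind), ?_⟩, by simp [hlen]⟩
    rwa [List.dropLast_append_getLast]

end IsInfiniteFactorial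

namespace Minimal

variable {M : Set (List A)}

lemma exists_append_singleton_mem (hM : Minimal IsInfiniteFactorial M) {u : List A} (hu : u ∈ M) :
    ∃ a, u ++ [a] ∈ M := by
  have hsub : {u | ∃ a, u ++ [a] ∈ M} ⊆ M := fun u ⟨a, ha⟩ =>
    hM.prop.1 _ ha u (List.prefix_append u [a]).isInfix
  rwa [← hM.eq_of_subset hM.prop.setOf_append_singleton hsub] at hu

/-- The words of `M` avoiding `u` form a factorial sublanguage not containing `u`, so by
minimality it is finite. -/
lemma exists_forall_infix (hM : Minimal IsInfiniteFactorial M) {u : List A} (hu : u ∈ M) :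
    ∃ N, ∀ s ∈ M, s.length = N → u <:+: s := by
  by_contra! havoid
  have hT : IsInfiniteFactorial {s ∈ M | ¬ u <:+: s} := by
    refine ⟨fun y ⟨hyM, hyu⟩ s hs => ⟨hM.prop.1 y hyM s hs, fun h => hyu (h.trans hs)⟩,
      fun N => ?_⟩
    obtain ⟨s, hsM, hsN, hsu⟩ := havoid N
    exact ⟨s, ⟨hsM, hsu⟩, hsN⟩
  have := hM.eq_of_subset hT (Set.sep_subset _ _)
  exact (this ▸ hu).2 (List.infix_refl u)

end Minimal

lemma exists_Fac_subset_of_forall_exists_append_singleton_mem {S : Set (List A)}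
    (hS : FactorClosed S) (hnil : [] ∈ S) (hext : ∀ u ∈ S, ∃ a, u ++ [a] ∈ S) :
    ∃ v : ℕ → A, Fac v ⊆ S := by
  choose next hnext using hext
  let pref : ℕ → S := fun n => (fun u : S => ⟨u.1 ++ [next u.1 u.2], hnext _ u.2⟩)^[n] ⟨[], hnil⟩
  let v : ℕ → A := fun k => next (pref k).1 (pref k).2
  have hpref : ∀ n, factorAt v 0 n = (pref n).1 := by
    intro n
    induction n with
    | zero => rfl
    | succ n ih =>
      rw [factorAt_add, ih, Nat.zero_add]
      simp [pref, v, factorAt, Function.iterate_succ_apply']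
  exact ⟨v, Fac_subset_of_forall_factorAt_zero_mem hS fun n => hpref n ▸ (pref n).2⟩

theorem IsInfiniteFactorial.exists_uniformlyRecurrent_Fac_subset [Finite A]
    {S : Set (List A)} (hS : IsInfiniteFactorial S) :
    ∃ v : ℕ → A, UniformlyRecurrent v ∧ Fac v ⊆ S := by
  obtain ⟨M, hMS, hM⟩ := hS.exists_minimal_subset
  obtain ⟨v, hvM⟩ := exists_Fac_subset_of_forall_exists_append_singleton_mem hM.prop.1
    hM.prop.nil_mem fun u hu => hM.exists_append_singleton_mem hu
  exact ⟨v, fun u hu => (hM.exists_forall_infix (hvM hu)).imp fun N hN s hs => hN s (hvM hs),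
    hvM.trans hMS⟩

lemma List.exists_mem_infix_of_infix_flatten {L : List (List A)} {s : List A} {B : ℕ}
    (hB : ∀ b ∈ L, b.length ≤ B) (hs : s <:+: L.flatten) (hlen : 2 * B < s.length) :
    ∃ b ∈ L, b <:+: s := by
  induction L with
  | nil =>
    rw [List.flatten_nil, List.infix_nil] at hs
    simp [hs] at hlen
  | cons b L ih =>
    rw [List.flatten_cons, List.infix_append_iff] at hs
    rcases hs with hsb | hsL | ⟨s₁, s₂, rfl, hs₁, hs₂⟩
    · have := hsb.length_le
      have := hB b (by simp)
      omega
    · obtain ⟨b', hb', hb's⟩ := ih (fun b' hb' => hB b' (by simp [hb'])) hsL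
      exact ⟨b', by simp [hb'], hb's⟩
    · have h₁ := hs₁.length_le
      have hb := hB b (by simp)
      cases L with
      | nil => simp [List.prefix_nil.1 hs₂] at hlen; omega
      | cons b' L =>
        have hb' := hB b' (by simp)
        have hlen₂ : b'.length ≤ s₂.length := by simp at hlen; omega
        refine ⟨b', by simp, ?_⟩
        exact (List.prefix_of_prefix_length_le (List.prefix_append _ _) hs₂ hlen₂).isInfix.trans
          List.infix_append_right

def blockFactors (w : ℕ → A) (Y : Finset (List A)) : Set (List A) :=
  {u | ∃ L : List (List A), (∀ b ∈ L, b ∈ Y) ∧ L.flatten ∈ Fac w ∧ u <:+: L.flatten}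

lemma blockFactors_subset_Fac (w : ℕ → A) (Y : Finset (List A)) : blockFactors w Y ⊆ Fac w :=
  fun _ ⟨_, _, hL, hu⟩ => factorClosed_Fac w _ hL _ hu

lemma isInfiniteFactorial_blockFactors {w : ℕ → A} {Y : Finset (List A)}
    (hY : ∀ b ∈ Y, b ≠ [])
    (hL : ∀ N, ∃ L : List (List A), L.length = N ∧ (∀ b ∈ L, b ∈ Y) ∧ L.flatten ∈ Fac w) :
    IsInfiniteFactorial (blockFactors w Y) := by
  refine ⟨fun y ⟨L, hLY, hLw, hy⟩ u hu => ⟨L, hLY, hLw, hu.trans hy⟩, fun n => ?_⟩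
  obtain ⟨L, rfl, hLY, hLw⟩ := hL n
  have hpos : ∀ b ∈ L, 1 ≤ b.length := fun b hb => List.length_pos_iff.2 (hY b (hLY b hb))
  have hlen : L.length ≤ L.flatten.length := by
    simpa using List.length_le_sum_of_one_le (L.map List.length) (by simpa using hpos)
  exact ⟨L.flatten.take L.length, ⟨L, hLY, hLw, (List.take_prefix _ _).isInfix⟩,
    List.length_take_of_le hlen⟩

lemma infix_of_mem_blockFactors {w : ℕ → A} {Y : Finset (List A)} {y u : List A}
    (hY : ∀ b ∈ Y, y <:+: b) (hu : u ∈ blockFactors w Y)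
    (hlen : 2 * Y.sup List.length < u.length) :
    y <:+: u := by
  obtain ⟨L, hLY, -, huL⟩ := hu
  obtain ⟨b, hb, hbu⟩ := List.exists_mem_infix_of_infix_flatten
    (fun b hb => Finset.le_sup (f := List.length) (hLY b hb)) huL hlen
  exact (hY b (hLY b hb)).trans hbu

lemma exists_finset_of_notMem_rad {w : ℕ → A} {y : List A} (hy : y ∈ Fac w) (hrad : y ∉ Rad w) :
    ∃ Y : Finset (List A), (∀ b ∈ Y, b ∈ Fac w ∧ y <:+: b) ∧
      ∀ N, ∃ L : List (List A), L.length = N ∧ (∀ b ∈ L, b ∈ Y) ∧ L.flatten ∈ Fac w := by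
  simpa [Rad, hy] using hrad

theorem exists_uniformlyRecurrent_of_notMem_rad [Finite A] {w : ℕ → A} {y : List A}
    (hy : y ∈ Fac w) (hrad : y ∉ Rad w) :
    ∃ v : ℕ → A, UniformlyRecurrent v ∧ Fac v ⊆ Fac w ∧ y ∈ Fac v := by
  rcases eq_or_ne y [] with rfl | hy₀
  · obtain ⟨v, hv, hvw⟩ := (isInfiniteFactorial_Fac w).exists_uniformlyRecurrent_Fac_subset
    exact ⟨v, hv, hvw, nil_mem_Fac v⟩
  obtain ⟨Y, hYy, hL⟩ := exists_finset_of_notMem_rad hy hrad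
  have hY : ∀ b ∈ Y, b ≠ [] := fun b hb hb₀ => hy₀ (List.infix_nil.1 (hb₀ ▸ (hYy b hb).2))
  obtain ⟨v, hv, hvY⟩ :=
    (isInfiniteFactorial_blockFactors hY hL).exists_uniformlyRecurrent_Fac_subset
  have hprefix := factorAt_mem_Fac v 0 (2 * Y.sup List.length + 1)
  refine ⟨v, hv, hvY.trans (blockFactors_subset_Fac w Y), factorClosed_Fac v _ hprefix _ ?_⟩
  exact infix_of_mem_blockFactors (fun b hb => (hYy b hb).2) (hvY hprefix) (by simp)

def principalOpen (w : ℕ → A) (z : List A) : Set {F // F ∈ RecSpec w} := {F | z ∈ F.1}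

lemma exists_infix_infix_of_mem_recSpec {w : ℕ → A} {F : Set (List A)} (hF : F ∈ RecSpec w)
    {y₁ y₂ : List A} (h₁ : y₁ ∈ F) (h₂ : y₂ ∈ F) : ∃ z ∈ F, y₁ <:+: z ∧ y₂ <:+: z := by
  obtain ⟨v, hv, rfl, -⟩ := hF
  exact hv.exists_mem_Fac_infix_infix h₁ h₂

lemma factorClosed_of_mem_recSpec {w : ℕ → A} {F : Set (List A)} (hF : F ∈ RecSpec w) :
    FactorClosed F := by
  obtain ⟨v, -, rfl, -⟩ := hF
  exact factorClosed_Fac v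

lemma nil_mem_of_mem_recSpec {w : ℕ → A} {F : Set (List A)} (hF : F ∈ RecSpec w) : [] ∈ F := by
  obtain ⟨v, -, rfl, -⟩ := hF
  exact nil_mem_Fac v

open Topology in
lemma exists_principalOpen_subset_of_isOpen {w : ℕ → A} {U : Set {F // F ∈ RecSpec w}}
    (hU : IsOpen[recTop w] U) {F : {F // F ∈ RecSpec w}} (hF : F ∈ U) :
    ∃ z ∈ F.1, principalOpen w z ⊆ U := by
  induction hU generalizing F with
  | basic V hV =>
    obtain ⟨S, -, -, rfl⟩ := hV
    obtain ⟨z, hzF, hzS⟩ := Set.not_subset.1 hF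
    exact ⟨z, hzF, fun F' hz => Set.not_subset.2 ⟨z, hz, hzS⟩⟩
  | univ => exact ⟨[], nil_mem_of_mem_recSpec F.2, Set.subset_univ _⟩
  | inter U₁ U₂ _ _ ih₁ ih₂ =>
    obtain ⟨y₁, hy₁, hU₁⟩ := ih₁ hF.1
    obtain ⟨y₂, hy₂, hU₂⟩ := ih₂ hF.2
    obtain ⟨z, hz, hz₁, hz₂⟩ := exists_infix_infix_of_mem_recSpec F.2 hy₁ hy₂
    refine ⟨z, hz, fun F' hzF' => ⟨hU₁ ?_, hU₂ ?_⟩⟩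
    · exact factorClosed_of_mem_recSpec F'.2 z hzF' y₁ hz₁
    · exact factorClosed_of_mem_recSpec F'.2 z hzF' y₂ hz₂
  | sUnion _ _ ih =>
    obtain ⟨V, hV, hFV⟩ := hF
    obtain ⟨z, hz, hzV⟩ := ih V hV hFV
    exact ⟨z, hz, fun F' hF' => ⟨V, hV, hzV hF'⟩⟩

end

theorem uniformlyRecurrent_dense_of_radical_empty {A : Type*} [Finite A]
    (w : ℕ → A) (hrad : Rad w = ∅) :
    ∀ U : Set {F // F ∈ RecSpec w}, @IsOpen _ (recTop w) U → U.Nonempty →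
      ∃ F ∈ U, ∃ v : ℕ → A, UniformlyRecurrent v ∧ F.1 = Fac v := by
  rintro U hU ⟨F, hF⟩
  obtain ⟨z, hzF, hzU⟩ := exists_principalOpen_subset_of_isOpen hU hF
  obtain ⟨v₀, -, hFv₀, hv₀w⟩ := F.2
  obtain ⟨v, hv, hvw, hzv⟩ :=
    exists_uniformlyRecurrent_of_notMem_rad (hv₀w (hFv₀ ▸ hzF)) (hrad ▸ Set.notMem_empty z)
  exact ⟨⟨Fac v, v, hv.recurrent, rfl, hvw⟩, hzU hzv, v, hv, rfl⟩
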